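/- The function γ₂ : N × N → 𝔽ₚ is a normalized 2-cocycle on N with values in 𝔽ₚ (for the trivial N-action): γ₂(a, 1) = γ₂(1, a) = 0 for every a ∈ N, and γ₂(b, c) − γ₂(a·b, c) + γ₂(a, b·c) − γ₂(a, b) = 0 for all a, b, c ∈ N. -/

import Mathlib

/-!
The cocycle identity already holds for the `ℤ_[p]`-valued lift `a₁₂·b₁₃ + q(a₁₂)·b₂₃` of `γ₂`,
before reduction mod `p`: since `2` is not a zero divisor, `q` satisfies
`q(x + y) = q x + q y + x·y`, and with the product formulas for unipotent matrices the
identity becomes a polynomial identity.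
-/

/-- `A` is an upper triangular unipotent 3×3 matrix over `ℤ_[p]`: diagonal entries `1`,
entries below the diagonal `0`.  The group `N` of the paper is the set of such matrices. -/
def IsUnipotentUpperTriangular {p : ℕ} [Fact p.Prime]
    (A : Matrix (Fin 3) (Fin 3) ℤ_[p]) : Prop :=
  (∀ i : Fin 3, A i i = 1) ∧ ∀ i j : Fin 3, j < i → A i j = 0

/-- The 2-cochain `γ₂(a, b) = π(a₁₂·b₁₃ + q(a₁₂)·b₂₃)` of the paper, where `q` is the
"halving" function with `2·q(x) = x² − x`. -/
noncomputable def gammaTwo {p : ℕ} [Fact p.Prime] (q : ℤ_[p] → ℤ_[p])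
    (A B : Matrix (Fin 3) (Fin 3) ℤ_[p]) : ZMod p :=
  PadicInt.toZMod (A 0 1 * B 0 2 + q (A 0 1) * B 1 2)

section Halving

variable {R : Type*} [CommRing R] [IsDomain R] [CharZero R] {q : R → R}

theorem halving_zero (hq : ∀ x : R, 2 * q x = x ^ 2 - x) : q 0 = 0 :=
  mul_left_cancel₀ (two_ne_zero : (2 : R) ≠ 0) (by simpa using hq 0)

theorem halving_add (hq : ∀ x : R, 2 * q x = x ^ 2 - x) (a b : R) :
    q (a + b) = q a + q b + a * b :=
  mul_left_cancel₀ (two_ne_zero : (2 : R) ≠ 0) (by linear_combination hq (a + b) - hq a - hq b)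

end Halving

namespace IsUnipotentUpperTriangular

variable {p : ℕ} [Fact p.Prime] {A B : Matrix (Fin 3) (Fin 3) ℤ_[p]}

theorem lower_entries (hA : IsUnipotentUpperTriangular A) :
    A 1 0 = 0 ∧ A 2 0 = 0 ∧ A 2 1 = 0 :=
  ⟨hA.2 1 0 (by decide), hA.2 2 0 (by decide), hA.2 2 1 (by decide)⟩

theorem mul_apply_zero_one (hA : IsUnipotentUpperTriangular A)
    (hB : IsUnipotentUpperTriangular B) : (A * B) 0 1 = A 0 1 + B 0 1 := by
  simp [Matrix.mul_apply, Fin.sum_univ_three, hA.1 0, hB.1 1, hB.lower_entries.2.2, add_comm]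

theorem mul_apply_one_two (hA : IsUnipotentUpperTriangular A)
    (hB : IsUnipotentUpperTriangular B) : (A * B) 1 2 = A 1 2 + B 1 2 := by
  simp [Matrix.mul_apply, Fin.sum_univ_three, hA.1 1, hB.1 2, hA.lower_entries.1, add_comm]

theorem mul_apply_zero_two (hA : IsUnipotentUpperTriangular A)
    (hB : IsUnipotentUpperTriangular B) :
    (A * B) 0 2 = A 0 2 + B 0 2 + A 0 1 * B 1 2 := by
  rw [Matrix.mul_apply, Fin.sum_univ_three, hA.1 0, hB.1 2]
  ring

end IsUnipotentUpperTriangular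

section GammaTwo

variable {p : ℕ} [Fact p.Prime] {q : ℤ_[p] → ℤ_[p]}

theorem gammaTwo_one_right (A : Matrix (Fin 3) (Fin 3) ℤ_[p]) : gammaTwo q A 1 = 0 := by
  simp [gammaTwo]

theorem gammaTwo_one_left (hq : ∀ x : ℤ_[p], 2 * q x = x ^ 2 - x)
    (A : Matrix (Fin 3) (Fin 3) ℤ_[p]) : gammaTwo q 1 A = 0 := by
  simp [gammaTwo, halving_zero hq]

theorem gammaTwo_cocycle (hq : ∀ x : ℤ_[p], 2 * q x = x ^ 2 - x)
    {A B C : Matrix (Fin 3) (Fin 3) ℤ_[p]} (hA : IsUnipotentUpperTriangular A)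
    (hB : IsUnipotentUpperTriangular B) (hC : IsUnipotentUpperTriangular C) :
    gammaTwo q B C - gammaTwo q (A * B) C + gammaTwo q A (B * C) - gammaTwo q A B = 0 := by
  simp only [gammaTwo, hA.mul_apply_zero_one hB, hB.mul_apply_zero_two hC,
    hB.mul_apply_one_two hC, halving_add hq, ← map_sub, ← map_add]
  convert map_zero (PadicInt.toZMod (p := p)) using 2
  ring

end GammaTwo

/-- `γ₂` is a normalized 2-cocycle on `N` with values in `𝔽_p` (trivial
action). -/
theorem stmt_13 {p : ℕ} [Fact p.Prime]
    (q : ℤ_[p] → ℤ_[p]) (hq : ∀ x : ℤ_[p], 2 * q x = x ^ 2 - x) :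
    (∀ A : Matrix (Fin 3) (Fin 3) ℤ_[p], IsUnipotentUpperTriangular A →
      gammaTwo q A 1 = 0 ∧ gammaTwo q 1 A = 0) ∧
    (∀ A B C : Matrix (Fin 3) (Fin 3) ℤ_[p],
      IsUnipotentUpperTriangular A → IsUnipotentUpperTriangular B →
      IsUnipotentUpperTriangular C →
      gammaTwo q B C - gammaTwo q (A * B) C + gammaTwo q A (B * C)
        - gammaTwo q A B = 0) :=
  ⟨fun A _ => ⟨gammaTwo_one_right A, gammaTwo_one_left hq A⟩,
    fun _ _ _ hA hB hC => gammaTwo_cocycle hq hA hB hC⟩
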